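/- arXiv:2309.11631 — 2 statements merged into one kernel-verified Lean document; each statement's English description precedes it below -/
import Mathlib

section
/- If I is an ideal of R generated by homogeneous elements of a single degree d and dim R/I = 0, then the defect sequence c_n = reg I^{n-1}/I^n − dn + 1 of the function reg I^{n-1}/I^n is weakly decreasing, i.e. c_{n+1} ≤ c_n for all n ≥ 1. -/
/-!
Common setup.

We encode a finitely generated standard graded algebra `R` over a field `k` by the data
`StdGraded k R`: the grading `deg : ℤ → Submodule k R` (an internal direct sum, vanishing
in negative degrees, with `deg 0 = k·1` and `deg (n+1) = deg 1 * deg n`), together with a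
finite family `gen` of degree-one elements spanning `deg 1` over `k` (so `R` is generated
in degree one by finitely many elements).

For homogeneous ideals `B ⊆ A` of `R`, the Castelnuovo–Mumford regularity of the graded
module `A/B` is formalized through the classical characterization
`reg M = max { j - i : β_{i,j}(M) ≠ 0 }`, where `β_{i,j}(M) = dim_k (Tor_i^S(M, k))_j` is
the graded Betti number over a polynomial ring `S = k[X_1, …, X_r]` mapping onto `R` via
the chosen degree-one generators.  These Betti numbers are computed honestly as the
homology of the graded Koszul complex `K(x_1, …, x_r; M)` on the degree-one generators:
`TorNonzero G A B i j` says that this Koszul homology of `A/B` is nonzero in homological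
degree `i` and internal degree `j`.  This agrees with the local cohomology definition
`reg M = max { a(H_m^i(M)) + i : i ≥ 0 }` for finitely generated graded modules over a
standard graded algebra.  Similarly, by a theorem of Trung, the partial regularity
`reg_t M = max { a(H_m^i(M)) + i : i ≤ t }` equals
`max { j - i : β_{i,j}(M) ≠ 0, i ≥ r - t }`, which is taken as the definition
`preg` below.
-/

structure StdGraded (k R : Type) [Field k] [CommRing R] [Algebra k R] where
  deg : ℤ → Submodule k R
  internal : DirectSum.IsInternal deg
  bot_of_neg : ∀ i : ℤ, i < 0 → deg i = ⊥
  deg_zero : deg 0 = 1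
  standard : ∀ n : ℕ, deg ((n : ℤ) + 1) = deg 1 * deg (n : ℤ)
  ngens : ℕ
  gen : Fin ngens → R
  gen_mem : ∀ i, gen i ∈ deg 1
  gen_span : Submodule.span k (Set.range gen) = deg 1

variable {k R : Type} [Field k] [CommRing R] [Algebra k R]

/-- The Koszul differential on the Koszul complex (on the degree-one generators of `R`)
with coefficients in `R`; a function `Finset (Fin r) → R` records the coordinates of an
element of an exterior power component with respect to the basis `e_s`. -/
noncomputable def kosD (G : StdGraded k R) (f : Finset (Fin G.ngens) → R) :
    Finset (Fin G.ngens) → R := fun t =>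
  ∑ j ∈ tᶜ, (-1 : R) ^ ((t.filter fun l => l < j).card) * G.gen j * f (insert j t)

/-- `TorNonzero G A B i j` : the internal degree `j` part of the `i`-th homology of the
Koszul complex of the degree-one generators with coefficients in the graded module `A/B`
is nonzero; equivalently, the graded Betti number `β_{i,j}(A/B)` over a polynomial ring
mapping onto `R` is nonzero. -/
def TorNonzero (G : StdGraded k R) (A B : Ideal R) (i : ℕ) (j : ℤ) : Prop :=
  ∃ f : Finset (Fin G.ngens) → R,
    (∀ s, if s.card = i then f s ∈ A ∧ f s ∈ G.deg (j - (i : ℤ)) else f s = 0) ∧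
    (∀ t, kosD G f t ∈ B) ∧
    ¬ ∃ g : Finset (Fin G.ngens) → R,
        (∀ s, if s.card = i + 1 then g s ∈ A ∧ g s ∈ G.deg (j - (i : ℤ) - 1) else g s = 0) ∧
        (∀ s, f s - kosD G g s ∈ B)

/-- The Castelnuovo–Mumford regularity `reg (A/B) = max { a(H_m^i(A/B)) + i : i ≥ 0 }` of
the graded `R`-module `A/B`, via the graded Betti number characterization
`reg = max { j - i : β_{i,j} ≠ 0 }`. -/
noncomputable def reg (G : StdGraded k R) (A B : Ideal R) : ℤ :=
  sSup {e : ℤ | ∃ (i : ℕ) (j : ℤ), e = j - (i : ℤ) ∧ TorNonzero G A B i j}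

/-- The partial regularity `reg_t (A/B) = max { a(H_m^i(A/B)) + i : 0 ≤ i ≤ t }`, via
Trung's characterization `reg_t M = max { j - i : β_{i,j}(M) ≠ 0, i ≥ r - t }`. -/
noncomputable def preg (G : StdGraded k R) (t : ℕ) (A B : Ideal R) : ℤ :=
  sSup {e : ℤ | ∃ (i : ℕ) (j : ℤ), G.ngens - t ≤ i ∧ e = j - (i : ℤ) ∧ TorNonzero G A B i j}

/-- `I` is a homogeneous (graded) ideal. -/
def IsHomogeneousIdeal (G : StdGraded k R) (I : Ideal R) : Prop :=
  ∃ T : Set R, (∀ s ∈ T, ∃ j : ℤ, s ∈ G.deg j) ∧ I = Ideal.span T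

/-- `I` is generated by forms of the single degree `d` (equigenerated). -/
def GeneratedInDegree (G : StdGraded k R) (d : ℕ) (I : Ideal R) : Prop :=
  ∃ T : Set R, T ⊆ (G.deg (d : ℤ) : Set R) ∧ I = Ideal.span T

/-- The irrelevant maximal graded ideal `m = ⊕_{i > 0} R_i` of the standard graded
algebra `R` (generated by the degree-one part). -/
def irrel (G : StdGraded k R) : Ideal R := Ideal.span (G.deg 1 : Set R)

/-- The saturation `Ĩ = ∪_t (I : m^t)` of an ideal `I`. -/
noncomputable def satIdeal (G : StdGraded k R) (I : Ideal R) : Ideal R :=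
  ⨆ t : ℕ, Submodule.colon I (((irrel G) ^ t : Ideal R) : Set R)

open Classical in
/-- The supremum in `WithBot ℤ` of a set of integers: `⊥` (i.e. `-∞`) if the set is
empty.  (Junk value if the set is unbounded above.) -/
noncomputable def zsupBot (s : Set ℤ) : WithBot ℤ :=
  if s.Nonempty then ((sSup s : ℤ) : WithBot ℤ) else ⊥

/-- The saturation degree `sdeg I = a(Ĩ/I) + 1 = a(H_m^0(R/I)) + 1`: the least degree
from which `Ĩ` and `I` agree, `⊥` (i.e. `-∞`) if `Ĩ = I`. -/
noncomputable def sdegB (G : StdGraded k R) (I : Ideal R) : WithBot ℤ :=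
  zsupBot {a : ℤ | ∃ j : ℤ, a = j + 1 ∧ ∃ y : R, y ∈ G.deg j ∧ y ∈ satIdeal G I ∧ y ∉ I}

/-!
Since `I` is homogeneous and `dim R/I = 0`, the irrelevant ideal lies in `√I`, so `mˢ ⊆ I` and
every `Iᵠ/Iᵠ⁺¹` has finite length. For a module `M` of finite length, nonzero Koszul homology in
bidegree `(i, j)` needs `M_{j-i} ≠ 0`, and an element of the top degree `t` of `M` is killed by
`m`, so it gives nonzero Koszul homology in bidegree `(r, t + r)`. Hence `reg (Iᵠ/Iᵠ⁺¹)` is the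
top degree of `Iᵠ/Iᵠ⁺¹`, which exists because `Iᵠ ≠ 0` and `⋂ₙ Iⁿ = 0`. Finally
`Iᵠ⁺¹ = I · Iᵠ` with `I` generated in degree `d`, so `(Iᵠ/Iᵠ⁺¹)_{j-d} = 0` forces
`(Iᵠ⁺¹/Iᵠ⁺²)_j = 0`: the top degree grows by at most `d` at each step.
-/

open DirectSum

theorem DirectSum.coe_decompose_mul_of_left_mem_sub {ι σ A : Type*} [DecidableEq ι] [AddGroup ι]
    [Semiring A] [SetLike σ A] [AddSubmonoidClass σ A] (𝒜 : ι → σ) [GradedRing 𝒜]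
    {e j : ι} {a b : A} (ha : a ∈ 𝒜 e) :
    (decompose 𝒜 (a * b) j : A) = a * decompose 𝒜 b (-e + j) := by
  rw [← coe_decompose_mul_add_of_left_mem 𝒜 ha, add_neg_cancel_left]

theorem Ideal.IsHomogeneous.pow {ι σ A : Type*} [DecidableEq ι] [AddMonoid ι] [CommSemiring A]
    [SetLike σ A] [AddSubmonoidClass σ A] {𝒜 : ι → σ} [GradedRing 𝒜] {I : Ideal A}
    (hI : I.IsHomogeneous 𝒜) (n : ℕ) : (I ^ n).IsHomogeneous 𝒜 := by
  induction n with
  | zero => simpa only [pow_zero, Ideal.one_eq_top] using Ideal.IsHomogeneous.top 𝒜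
  | succ n ih => simpa only [pow_succ] using ih.mul hI

theorem Ideal.span_mul_induction {A : Type*} [CommSemiring A] {T : Set A} {J : Ideal A}
    {p : A → Prop} (zero : p 0) (add : ∀ x y, p x → p y → p (x + y))
    (mul : ∀ t ∈ T, ∀ w ∈ J, p (t * w)) {x : A} (hx : x ∈ Ideal.span T * J) : p x := by
  refine Submodule.mul_induction_on hx (fun a ha b hb => ?_) add
  induction ha using Submodule.span_induction generalizing b with
  | mem t ht => exact mul t ht b hb
  | zero => simpa only [zero_mul] using zero
  | add a a' _ _ iha iha' => simpa only [add_mul] using add _ _ (iha b hb) (iha' b hb)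
  | smul r a _ iha =>
    rw [smul_eq_mul, mul_assoc, mul_left_comm]
    exact iha (r * b) (J.mul_mem_left r hb)

namespace StdGraded

open Pointwise

variable (G : StdGraded k R) {d : ℕ} {T : Set R}

theorem deg_natCast_mul_deg (a b : ℕ) : G.deg a * G.deg b = G.deg ((a + b : ℕ) : ℤ) := by
  induction a with
  | zero => simp [G.deg_zero]
  | succ a ih =>
    rw [Nat.cast_succ, G.standard, mul_assoc, ih, ← G.standard, Nat.succ_add, Nat.cast_succ]

theorem mul_mem_deg {i j : ℤ} {x y : R} (hx : x ∈ G.deg i) (hy : y ∈ G.deg j) :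
    x * y ∈ G.deg (i + j) := by
  rcases lt_or_ge i 0 with hi | hi
  · simp_all [G.bot_of_neg i hi]
  rcases lt_or_ge j 0 with hj | hj
  · simp_all [G.bot_of_neg j hj]
  lift i to ℕ using hi
  lift j to ℕ using hj
  rw [← Nat.cast_add, ← G.deg_natCast_mul_deg]
  exact Submodule.mul_mem_mul hx hy

instance gradedMonoid : SetLike.GradedMonoid G.deg where
  one_mem := by rw [G.deg_zero]; exact Submodule.one_le.mp le_rfl
  mul_mem _ _ _ _ := G.mul_mem_deg

noncomputable instance gradedRing : GradedRing G.deg :=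
  { G.internal.chooseDecomposition with }

theorem exists_algebraMap_eq_of_mem_deg_zero {x : R} (hx : x ∈ G.deg 0) :
    ∃ c : k, algebraMap k R c = x := by
  rw [G.deg_zero] at hx
  exact Submodule.mem_one.mp hx

theorem decompose_eq_zero_of_neg {j : ℤ} (hj : j < 0) (x : R) : (decompose G.deg x j : R) = 0 := by
  simpa [G.bot_of_neg j hj] using (decompose G.deg x j).2

theorem decompose_mul_eq_zero_of_lt {e : ℤ} {x : R} (hx : ∀ j < e, (decompose G.deg x j : R) = 0)
    (r : R) {j : ℤ} (hj : j < e) : (decompose G.deg (r * x) j : R) = 0 := by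
  classical
  rw [← sum_support_decompose G.deg r, Finset.sum_mul, decompose_sum, DFinsupp.finsetSum_apply,
    AddSubmonoidClass.coe_finsetSum]
  refine Finset.sum_eq_zero fun i _ => ?_
  rw [coe_decompose_mul_of_left_mem_sub G.deg (decompose G.deg r i).2]
  rcases lt_or_ge i 0 with hi | hi
  · rw [G.decompose_eq_zero_of_neg hi, zero_mul]
  · rw [hx _ (by omega), mul_zero]

theorem decompose_eq_zero_of_mem_span {S : Set R} {e : ℤ} (hS : S ⊆ G.deg e) {x : R}
    (hx : x ∈ Ideal.span S) {j : ℤ} (hj : j < e) : (decompose G.deg x j : R) = 0 := by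
  induction hx using Submodule.span_induction generalizing j with
  | mem y hy => exact decompose_of_mem_ne G.deg (hS hy) hj.ne'
  | zero => simp
  | add a b _ _ ha hb => simp [decompose_add, ha hj, hb hj]
  | smul r a _ ha => exact G.decompose_mul_eq_zero_of_lt (fun j hj => ha hj) r hj

theorem irrel_eq_span_range_gen : irrel G = Ideal.span (Set.range G.gen) := by
  rw [irrel, ← G.gen_span, Ideal.span, Submodule.span_span_of_tower]

theorem irrel_fg : (irrel G).FG := by
  rw [irrel_eq_span_range_gen]
  exact Submodule.fg_span (Set.finite_range G.gen)

theorem mem_irrel_pow_of_mem_deg (c : ℕ) {x : R} (hx : x ∈ G.deg c) : x ∈ irrel G ^ c := by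
  induction c generalizing x with
  | zero => simp
  | succ c ih =>
    rw [Nat.cast_succ, G.standard] at hx
    have hle : G.deg 1 * G.deg c ≤ (irrel G ^ (c + 1)).restrictScalars k :=
      Submodule.mul_le.mpr fun a ha b hb =>
        pow_succ' (irrel G) c ▸ Ideal.mul_mem_mul (Ideal.subset_span ha) (ih hb)
    exact hle hx

theorem sub_decompose_zero_mem_irrel (x : R) : x - decompose G.deg x 0 ∈ irrel G := by
  induction x using DirectSum.Decomposition.inductionOn G.deg with
  | zero => simp
  | add x y hx hy => simpa [decompose_add, add_sub_add_comm] using add_mem hx hy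
  | @homogeneous i x =>
    obtain ⟨x, hx⟩ := x
    rcases lt_trichotomy i 0 with hi | rfl | hi
    · rw [G.bot_of_neg i hi, Submodule.mem_bot] at hx
      simp [hx]
    · simp [decompose_of_mem_same G.deg hx]
    · rw [decompose_of_mem_ne G.deg hx hi.ne', sub_zero]
      lift i to ℕ using hi.le
      exact Ideal.pow_le_self (by omega) (G.mem_irrel_pow_of_mem_deg i hx)

theorem irrel_ne_top [Nontrivial R] : irrel G ≠ ⊤ := by
  intro h
  have h1 : (1 : R) ∈ irrel G := h ▸ Submodule.mem_top
  have := G.decompose_eq_zero_of_mem_span le_rfl h1 zero_lt_one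
  rw [decompose_of_mem_same G.deg (SetLike.one_mem_graded G.deg)] at this
  exact one_ne_zero this

theorem le_irrel_of_isHomogeneous {J : Ideal R} (hJ : J.IsHomogeneous G.deg) (hJtop : J ≠ ⊤) :
    J ≤ irrel G := by
  intro x hx
  obtain ⟨c, hc⟩ := G.exists_algebraMap_eq_of_mem_deg_zero (decompose G.deg x 0).2
  obtain rfl : c = 0 := by
    by_contra hc0
    exact hJtop (J.eq_top_of_isUnit_mem (hc ▸ hJ 0 hx) ((IsUnit.mk0 c hc0).map _))
  simpa [← hc] using G.sub_decompose_zero_mem_irrel x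

theorem irrel_le_radical {I : Ideal R} (hI : I.IsHomogeneous G.deg)
    (hdim : ringKrullDim (R ⧸ I) = 0) : irrel G ≤ I.radical := by
  have hdim0 : Ring.KrullDimLE 0 (R ⧸ I) := Ring.krullDimLE_iff.mpr hdim.le
  rw [hI.radical_eq]
  refine le_sInf fun J ⟨hJ, hIJ, hJprime⟩ => ?_
  have : Nontrivial R :=
    nontrivial_of_ne 0 1 fun h => J.ne_top_iff_one.mp hJprime.ne_top (h ▸ J.zero_mem)
  obtain ⟨P, hP, hPJ⟩ := Ideal.exists_minimalPrimes_le hIJ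
  have hPmax := Ideal.krullDimLE_zero_quotient_iff_forall_minimalPrimes_isMaximal.mp hdim0 P hP
  rw [hPmax.eq_of_le hJprime.ne_top hPJ] at hPmax
  exact (hPmax.eq_of_le G.irrel_ne_top (G.le_irrel_of_isHomogeneous hJ hJprime.ne_top)).ge

theorem isHomogeneous_span (hT : T ⊆ G.deg d) : (Ideal.span T).IsHomogeneous G.deg :=
  Ideal.homogeneous_span G.deg T fun _ hx => ⟨d, hT hx⟩

theorem pow_subset_deg (hT : T ⊆ G.deg d) (n : ℕ) : T ^ n ⊆ G.deg (d * n : ℕ) := by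
  induction n with
  | zero => simpa [G.deg_zero] using SetLike.one_mem_graded G.deg
  | succ n ih =>
    rintro _ ⟨a, ha, b, hb, rfl⟩
    simpa [mul_add] using G.mul_mem_deg (ih ha) (hT hb)

theorem decompose_eq_zero_of_mem_span_pow (hT : T ⊆ G.deg d) {n : ℕ} {x : R}
    (hx : x ∈ Ideal.span T ^ n) {j : ℤ} (hj : j < d * n) : (decompose G.deg x j : R) = 0 := by
  rw [Ideal.span, Submodule.span_pow] at hx
  exact G.decompose_eq_zero_of_mem_span (G.pow_subset_deg hT n) hx (by exact_mod_cast hj)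

theorem eq_zero_of_forall_mem_span_pow (hd : 1 ≤ d) (hT : T ⊆ G.deg d) {x : R}
    (hx : ∀ n, x ∈ Ideal.span T ^ n) : x = 0 := by
  classical
  rw [← sum_support_decompose G.deg x]
  refine Finset.sum_eq_zero fun j _ => ?_
  refine G.decompose_eq_zero_of_mem_span_pow hT (hx (j.toNat + 1)) ?_
  push_cast
  nlinarith [Int.self_le_toNat j]

theorem span_pow_not_le_pow_succ (hd : 1 ≤ d) (hT : T ⊆ G.deg d) {q : ℕ}
    (hne : Ideal.span T ^ q ≠ ⊥) : ¬ Ideal.span T ^ q ≤ Ideal.span T ^ (q + 1) := by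
  intro hle
  have hstable : ∀ m, Ideal.span T ^ q ≤ Ideal.span T ^ (q + m) := by
    intro m
    induction m with
    | zero => rfl
    | succ m ih =>
      rw [← add_assoc, pow_succ]
      exact hle.trans (pow_succ (Ideal.span T) q ▸ Ideal.mul_mono_left ih)
  refine hne (eq_bot_iff.mpr fun x hx => ?_)
  exact (G.eq_zero_of_forall_mem_span_pow hd hT fun n =>
    Ideal.pow_le_pow_right (Nat.le_add_left n q) (hstable n hx)).symm ▸ Submodule.zero_mem _

/-- The degrees `j` in which the graded module `A/B` is nonzero, provided `A` is homogeneous. -/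
def nonzeroDegrees (A B : Ideal R) : Set ℤ := {j | ∃ y ∈ A, y ∈ G.deg j ∧ y ∉ B}

theorem nonzeroDegrees_nonempty {A B : Ideal R} (hA : A.IsHomogeneous G.deg) (hAB : ¬ A ≤ B) :
    (G.nonzeroDegrees A B).Nonempty := by
  classical
  contrapose! hAB
  intro x hx
  rw [← sum_support_decompose G.deg x]
  refine Submodule.sum_mem _ fun j _ => ?_
  by_contra hj
  exact hAB.subset ⟨_, hA j hx, (decompose G.deg x j).2, hj⟩

theorem lt_of_mem_nonzeroDegrees {A B : Ideal R} {s : ℕ} (hs : irrel G ^ s ≤ B) {j : ℤ}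
    (hj : j ∈ G.nonzeroDegrees A B) : j < s := by
  obtain ⟨y, -, hy, hyB⟩ := hj
  by_contra! hsj
  lift j to ℕ using (Nat.cast_nonneg s).trans hsj
  exact hyB (hs (Ideal.pow_le_pow_right (by exact_mod_cast hsj)
    (G.mem_irrel_pow_of_mem_deg j hy)))

theorem sub_mem_nonzeroDegrees_of_torNonzero {A B : Ideal R} {i : ℕ} {j : ℤ}
    (h : TorNonzero G A B i j) : j - i ∈ G.nonzeroDegrees A B := by
  obtain ⟨f, hf, -, hnb⟩ := h
  obtain ⟨s, hs⟩ : ∃ s, f s ∉ B := by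
    by_contra! hfB
    refine hnb ⟨0, fun s => ?_, fun s => by simpa [kosD] using hfB s⟩
    split_ifs <;> simp
  have hfs := hf s
  split_ifs at hfs with hcard
  · exact ⟨f s, hfs.1, hfs.2, hs⟩
  · exact absurd (hfs ▸ B.zero_mem) hs

/-- An element of `A/B` of degree `t` annihilated by the generators is a Koszul cycle in top
homological degree, and it cannot be a boundary since there is nothing above it. -/
theorem torNonzero_ngens_of_socle {A B : Ideal R} {t : ℤ}
    (hsoc : ∀ y ∈ A, y ∈ G.deg (t + 1) → y ∈ B) {x : R} (hx : x ∈ A) (hxt : x ∈ G.deg t)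
    (hxB : x ∉ B) : TorNonzero G A B G.ngens (t + G.ngens) := by
  classical
  refine ⟨fun s => if s = Finset.univ then x else 0, fun s => ?_, fun u => ?_, ?_⟩
  · by_cases hs : s = Finset.univ
    · simpa [hs] using ⟨hx, hxt⟩
    · simp [hs]
  · refine Submodule.sum_mem _ fun l _ => ?_
    dsimp only
    split_ifs
    · rw [mul_assoc]
      refine B.mul_mem_left _ (hsoc _ (A.mul_mem_left _ hx) ?_)
      simpa [add_comm] using G.mul_mem_deg (G.gen_mem l) hxt
    · simp
  · rintro ⟨g, hg, hfg⟩
    have hg0 : g = 0 := funext fun s => by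
      have hcard : s.card ≠ G.ngens + 1 := by
        have := Finset.card_le_univ s
        rw [Fintype.card_fin] at this
        omega
      simpa [hcard] using hg s
    exact hxB (by simpa [hg0, kosD] using hfg Finset.univ)

theorem reg_eq_of_isGreatest {A B : Ideal R} {t : ℤ} (ht : IsGreatest (G.nonzeroDegrees A B) t) :
    reg G A B = t := by
  obtain ⟨⟨x, hx, hxt, hxB⟩, hmax⟩ := ht
  have hsoc : ∀ y ∈ A, y ∈ G.deg (t + 1) → y ∈ B := fun y hy hyt => by
    by_contra hyB
    exact (lt_add_one t).not_ge (hmax ⟨y, hy, hyt, hyB⟩)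
  have hgreatest : IsGreatest {e : ℤ | ∃ (i : ℕ) (j : ℤ), e = j - i ∧ TorNonzero G A B i j} t :=
    ⟨⟨G.ngens, t + G.ngens, by ring, G.torNonzero_ngens_of_socle hsoc hx hxt hxB⟩,
      fun _ ⟨_, _, he, hij⟩ => he ▸ hmax (G.sub_mem_nonzeroDegrees_of_torNonzero hij)⟩
  exact hgreatest.csSup_eq

/-- Multiplication by the degree-`d` generators maps `(Iᵠ/Iᵠ⁺¹)_{j-d}` onto `(Iᵠ⁺¹/Iᵠ⁺²)_j`. -/
theorem sub_mem_nonzeroDegrees_span_pow (hT : T ⊆ G.deg d) {q : ℕ} {j : ℤ}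
    (hj : j ∈ G.nonzeroDegrees (Ideal.span T ^ (q + 1)) (Ideal.span T ^ (q + 2))) :
    j - d ∈ G.nonzeroDegrees (Ideal.span T ^ q) (Ideal.span T ^ (q + 1)) := by
  obtain ⟨y, hy, hyj, hyB⟩ := hj
  by_contra hjd
  refine hyB (decompose_of_mem_same G.deg hyj ▸ ?_)
  rw [pow_succ'] at hy
  refine Ideal.span_mul_induction
    (p := fun z => (decompose G.deg z j : R) ∈ Ideal.span T ^ (q + 2)) (by simp)
    (fun a b ha hb => by simpa [decompose_add] using add_mem ha hb) (fun t ht w hw => ?_) hy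
  rw [coe_decompose_mul_of_left_mem_sub G.deg (hT ht), pow_succ' _ (q + 1)]
  refine Ideal.mul_mem_mul (Ideal.subset_span ht) ?_
  by_contra hwB
  refine hjd ⟨_, (G.isHomogeneous_span hT).pow q _ hw, ?_, hwB⟩
  simpa only [neg_add_eq_sub] using (decompose G.deg w (-d + j)).2

theorem exists_isGreatest_nonzeroDegrees_span_pow (hd : 1 ≤ d) (hT : T ⊆ G.deg d) {s : ℕ}
    (hs : irrel G ^ s ≤ Ideal.span T) {q : ℕ} (hne : Ideal.span T ^ q ≠ ⊥) :
    ∃ t, IsGreatest (G.nonzeroDegrees (Ideal.span T ^ q) (Ideal.span T ^ (q + 1))) t := by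
  have hbdd : BddAbove (G.nonzeroDegrees (Ideal.span T ^ q) (Ideal.span T ^ (q + 1))) := by
    refine ⟨s * (q + 1), fun j hj => (G.lt_of_mem_nonzeroDegrees ?_ hj).le⟩
    rw [pow_mul]
    exact Ideal.pow_right_mono hs _
  exact hbdd.exists_isGreatest_of_nonempty
    (G.nonzeroDegrees_nonempty ((G.isHomogeneous_span hT).pow q)
      (G.span_pow_not_le_pow_succ hd hT hne))

end StdGraded

theorem stmt2_general (G : StdGraded k R) (I : Ideal R) (d : ℕ) (hd : 1 ≤ d)
    (hgen : GeneratedInDegree G d I)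
    (hpow : ∀ n : ℕ, 1 ≤ n → I ^ n ≠ ⊥)
    (hdim : ringKrullDim (R ⧸ I) = 0) :
    ∀ n : ℕ, 1 ≤ n →
      reg G (I ^ n) (I ^ (n + 1)) - (d : ℤ) * (n + 1) + 1 ≤
        reg G (I ^ (n - 1)) (I ^ n) - (d : ℤ) * n + 1 := by
  obtain ⟨T, hT, rfl⟩ := hgen
  obtain ⟨s, hs⟩ := Ideal.exists_pow_le_of_le_radical_of_fg
    (G.irrel_le_radical (G.isHomogeneous_span hT) hdim) G.irrel_fg
  have hne : ∀ q, Ideal.span T ^ q ≠ ⊥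
    | 0 => ne_bot_of_le_ne_bot (pow_one (Ideal.span T) ▸ hpow 1 le_rfl)
        (Ideal.pow_le_pow_right zero_le_one)
    | q + 1 => hpow (q + 1) q.succ_pos
  rintro n hn
  obtain ⟨q, rfl⟩ := Nat.exists_eq_add_of_le' hn
  obtain ⟨t₁, ht₁⟩ := G.exists_isGreatest_nonzeroDegrees_span_pow hd hT hs (hne (q + 1))
  obtain ⟨t₀, ht₀⟩ := G.exists_isGreatest_nonzeroDegrees_span_pow hd hT hs (hne q)
  have hstep := ht₀.2 (G.sub_mem_nonzeroDegrees_span_pow hT ht₁.1)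
  rw [Nat.add_sub_cancel, G.reg_eq_of_isGreatest ht₁, G.reg_eq_of_isGreatest ht₀]
  push_cast
  linarith

/-- If `I` is generated by forms of a single degree `d` and `dim R/I = 0`, then the
defect sequence `cₙ = reg Iⁿ⁻¹/Iⁿ - d·n + 1` is weakly decreasing. -/
theorem stmt2 (G : StdGraded k R) (I : Ideal R) (d : ℕ) (hd : 1 ≤ d)
    (hgen : GeneratedInDegree G d I) (hproper : I ≠ ⊤)
    (hpow : ∀ n : ℕ, 1 ≤ n → I ^ n ≠ ⊥)
    (hdim : ringKrullDim (R ⧸ I) = 0) :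
    ∀ n : ℕ, 1 ≤ n →
      reg G (I ^ n) (I ^ (n + 1)) - (d : ℤ) * (n + 1) + 1 ≤
        reg G (I ^ (n - 1)) (I ^ n) - (d : ℤ) * n + 1 :=
  stmt2_general G I d hd hgen hpow hdim
end

section
/- Let {c_n}_{n≥0} be a weakly decreasing sequence of positive integers, d ≥ 1 an integer, and m the minimum integer such that c_n = c_m for all n > m. Let S = k[x,y] over a field k, Q = (x^{c_0}, x^{c_1} y^d, ..., x^{c_m} y^{dm}), R = S/Q and I = (y^d, Q)/Q. Then for all n ≥ 1: reg R/I^n = max{d(i+1) + c_i − 2 : i = 0, ..., n−1} if n ≤ m, and reg R/I^n = max{dn + c_m − 2, d(i+1) + c_i − 2 : i = 0, ..., m−1} if n > m. In particular, if c_i − c_{i+1} ≤ d for all i < m, then reg R/I^n = dn + c_{n−1} − 2 for all n ≥ 1. -/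
variable {k R : Type} [Field k] [CommRing R] [Algebra k R]

/-!
The quotient `R/Iⁿ` is Artinian, and the regularity of an Artinian graded module is its top
degree `N`: a nonzero element of degree `N` is killed by the irrelevant ideal, so it is a nonzero
class in the top Koszul homology, in internal degree `N + r`; and a Koszul cycle of internal
degree `j` with `j - i > N` has all its coefficients zero in `R/Iⁿ`, so it is a boundary.

The ideal `(y^(dn)) + Q` is the monomial ideal `(y^(dn), x^(c_i) y^(di))`, and `x^a y^b` lies
outside it iff `b < dn` and `a < c_⌊b/d⌋`. On the strip `di ≤ b < d(i+1)` the largest degree of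
such a monomial is `d(i+1) + c_i - 2`, so the top degree of `R/Iⁿ` is the largest of these
numbers over `i < n`, and the three formulas are three ways of computing this maximum.
-/

theorem StdGraded.mul_mem_deg_add_one (G : StdGraded k R) {x y : R} {N : ℤ}
    (hx : x ∈ G.deg 1) (hy : y ∈ G.deg N) : x * y ∈ G.deg (N + 1) := by
  rcases lt_or_ge N 0 with hN | hN
  · rw [G.bot_of_neg N hN, Submodule.mem_bot] at hy
    rw [hy, mul_zero]
    exact zero_mem _
  · lift N to ℕ using hN
    rw [G.standard]
    exact Submodule.mul_mem_mul hx hy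

@[simp]
theorem kosD_zero (G : StdGraded k R) : kosD G 0 = 0 := by
  ext t
  simp [kosD]

theorem TorNonzero.sub_le {G : StdGraded k R} {B : Ideal R} {i : ℕ} {j N : ℤ}
    (h : TorNonzero G ⊤ B i j) (hB : ∀ j' > N, ∀ y ∈ G.deg j', y ∈ B) : j - i ≤ N := by
  obtain ⟨f, hf, -, hnb⟩ := h
  by_contra! hN
  refine hnb ⟨0, fun s => ?_, fun s => ?_⟩
  · split_ifs
    exacts [⟨trivial, zero_mem _⟩, rfl]
  · rw [kosD_zero, Pi.zero_apply, sub_zero]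
    have hfs := hf s
    split_ifs at hfs
    exacts [hB _ hN _ hfs.2, hfs ▸ zero_mem B]

theorem torNonzero_ngens_of_gen_mul_mem {G : StdGraded k R} {B : Ideal R} {y : R} {N : ℤ}
    (hy : y ∈ G.deg N) (hyB : y ∉ B) (hsoc : ∀ l, G.gen l * y ∈ B) :
    TorNonzero G ⊤ B G.ngens (N + G.ngens) := by
  classical
  refine ⟨Pi.single Finset.univ y, fun s => ?_, fun t => ?_, ?_⟩
  · have hcard : s.card = G.ngens ↔ s = Finset.univ := by
      rw [← Finset.card_eq_iff_eq_univ, Fintype.card_fin]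
    split_ifs with hs <;> rw [hcard] at hs
    · subst hs
      simpa using hy
    · exact Pi.single_eq_of_ne hs _
  · refine Ideal.sum_mem _ fun l _ => ?_
    by_cases hl : insert l t = Finset.univ
    · rw [hl, Pi.single_eq_same, mul_assoc]
      exact B.mul_mem_left _ (hsoc l)
    · rw [Pi.single_eq_of_ne hl, mul_zero]
      exact zero_mem B
  · rintro ⟨g, hg, hgB⟩
    have hg0 : g = 0 := funext fun s => by
      have hs : s.card ≠ G.ngens + 1 := by
        have := s.card_le_univ
        rw [Fintype.card_fin] at this
        omega
      simpa [hs] using hg s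
    exact hyB (by simpa [hg0] using hgB Finset.univ)

theorem reg_top_eq_of_isGreatest {G : StdGraded k R} {B : Ideal R} {N : ℤ}
    (h : IsGreatest {j | ∃ y ∈ G.deg j, y ∉ B} N) : reg G ⊤ B = N := by
  obtain ⟨⟨y, hy, hyB⟩, hmax⟩ := h
  have hB : ∀ j > N, ∀ y ∈ G.deg j, y ∈ B := fun j hj y hy => by
    by_contra hyB
    exact (hmax ⟨y, hy, hyB⟩).not_gt hj
  have hsoc : ∀ l, G.gen l * y ∈ B := fun l =>
    hB _ (lt_add_one N) _ (G.mul_mem_deg_add_one (G.gen_mem l) hy)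
  refine IsGreatest.csSup_eq ⟨⟨G.ngens, N + G.ngens, by ring,
    torNonzero_ngens_of_gen_mul_mem hy hyB hsoc⟩, ?_⟩
  rintro e ⟨i, j, rfl, hij⟩
  exact hij.sub_le hB

theorem isGreatest_iff_of_subset_of_forall_exists_le {α : Type*} [PartialOrder α] {s t : Set α}
    {a : α} (hts : t ⊆ s) (hst : ∀ x ∈ s, ∃ y ∈ t, x ≤ y) : IsGreatest s a ↔ IsGreatest t a := by
  constructor
  · rintro ⟨ha, hub⟩
    obtain ⟨y, hy, hay⟩ := hst a ha
    exact ⟨le_antisymm (hub (hts hy)) hay ▸ hy, fun x hx => hub (hts hx)⟩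
  · rintro ⟨ha, hub⟩
    refine ⟨hts ha, fun x hx => ?_⟩
    obtain ⟨y, hy, hxy⟩ := hst x hx
    exact hxy.trans (hub hy)

/-- The degree of the outer corner `x^(c i - 1) * y^(d * (i + 1) - 1)` of the staircase of
standard monomials of `k[x,y] ⧸ (y^(d n), Q)`. -/
def cornerDegree (c : ℕ → ℕ) (d i : ℕ) : ℤ := d * (i + 1) + c i - 2

section Staircase

variable {c : ℕ → ℕ} {d m : ℕ}

theorem exists_le_and_mul_le_iff (hc : Antitone c) (hd : 1 ≤ d) (hcm : ∀ i, m ≤ i → c i = c m)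
    (a b : ℕ) : (∃ i ≤ m, c i ≤ a ∧ d * i ≤ b) ↔ c (b / d) ≤ a := by
  have hdiv : ∀ i, d * i ≤ b ↔ i ≤ b / d := fun i => by
    rw [mul_comm, Nat.le_div_iff_mul_le hd]
  constructor
  · rintro ⟨i, -, hia, hib⟩
    exact (hc ((hdiv i).1 hib)).trans hia
  · intro h
    rcases le_or_gt (b / d) m with hbm | hmb
    · exact ⟨b / d, hbm, h, (hdiv _).2 le_rfl⟩
    · exact ⟨m, le_rfl, hcm _ hmb.le ▸ h, (hdiv m).2 hmb.le⟩

theorem isGreatest_staircase_iff (hpos : ∀ i, 1 ≤ c i) (hd : 1 ≤ d) (n : ℕ) (N : ℤ) :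
    IsGreatest {e : ℤ | ∃ x : Fin 2 →₀ ℕ, e = x.degree ∧ x 1 < d * n ∧ x 0 < c (x 1 / d)} N ↔
      IsGreatest {e | ∃ i : ℕ, i < n ∧ e = cornerDegree c d i} N := by
  have hdeg : ∀ x : Fin 2 →₀ ℕ, x.degree = x 0 + x 1 := fun x => by
    rw [Finsupp.degree_eq_sum, Fin.sum_univ_two]
  refine isGreatest_iff_of_subset_of_forall_exists_le ?_ ?_
  · rintro e ⟨i, hi, rfl⟩
    have hci := hpos i
    have hdi : d * i + d ≤ d * n := by rw [← mul_add_one]; exact Nat.mul_le_mul_left d hi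
    have hb : (d * i + d - 1) / d = i :=
      Nat.div_eq_of_lt_le (by rw [mul_comm]; omega) (by rw [add_one_mul, mul_comm]; omega)
    refine ⟨Finsupp.single 0 (c i - 1) + Finsupp.single 1 (d * i + d - 1), ?_, ?_, ?_⟩
    · simp only [cornerDegree, hdeg, Finsupp.add_apply, Finsupp.single_apply]
      push_cast [mul_add_one]
      omega
    · simp
      omega
    · simp [hb]
      omega
  · rintro e ⟨x, rfl, hxn, hxc⟩
    have hq := Nat.lt_mul_div_succ (x 1) hd
    rw [mul_add_one] at hq
    refine ⟨_, ⟨x 1 / d, ?_, rfl⟩, ?_⟩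
    · rw [Nat.div_lt_iff_lt_mul hd, mul_comm]
      exact hxn
    · rw [hdeg, cornerDegree, mul_add_one]
      generalize x 1 / d = q at hq hxc
      push_cast
      omega

theorem isGreatest_cornerDegree_iff_of_lt (hcm : ∀ i, m ≤ i → c i = c m) {n : ℕ} (hmn : m < n)
    (N : ℤ) : IsGreatest {e | ∃ i : ℕ, i < n ∧ e = cornerDegree c d i} N ↔
      IsGreatest {e | e = (d : ℤ) * n + c m - 2 ∨ ∃ i : ℕ, i < m ∧ e = cornerDegree c d i} N := by
  refine isGreatest_iff_of_subset_of_forall_exists_le ?_ ?_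
  · rintro e (rfl | ⟨i, hi, rfl⟩)
    · refine ⟨n - 1, by omega, ?_⟩
      rw [cornerDegree, hcm (n - 1) (by omega), Nat.cast_pred (by omega), sub_add_cancel]
    · exact ⟨i, hi.trans hmn, rfl⟩
  · rintro e ⟨i, hi, rfl⟩
    by_cases him : i < m
    · exact ⟨_, Or.inr ⟨i, him, rfl⟩, le_rfl⟩
    · refine ⟨_, Or.inl rfl, ?_⟩
      have hdi : (d : ℤ) * (i + 1) ≤ d * n := by gcongr; exact_mod_cast hi
      rw [cornerDegree, hcm i (not_lt.1 him)]
      linarith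

theorem monotone_cornerDegree (hcm : ∀ i, m ≤ i → c i = c m)
    (hstep : ∀ i : ℕ, i < m → (c i : ℤ) - c (i + 1) ≤ d) : Monotone (cornerDegree c d) := by
  refine monotone_nat_of_le_succ fun i => ?_
  have hci : (c i : ℤ) - c (i + 1) ≤ d := by
    by_cases him : i < m
    · exact hstep i him
    · rw [hcm i (by omega), hcm (i + 1) (by omega), sub_self]
      exact Int.natCast_nonneg d
  simp only [cornerDegree]
  push_cast
  linarith

theorem isGreatest_cornerDegree_of_monotone (h : Monotone (cornerDegree c d)) {n : ℕ}
    (hn : 1 ≤ n) :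
    IsGreatest {e | ∃ i : ℕ, i < n ∧ e = cornerDegree c d i} (cornerDegree c d (n - 1)) :=
  ⟨⟨n - 1, by omega, rfl⟩, by rintro e ⟨i, hi, rfl⟩; exact h (by omega)⟩

end Staircase

open MvPolynomial

theorem setOf_deg_notMem_eq {σ : Type} {Q : Ideal (MvPolynomial σ k)}
    {G : StdGraded k (MvPolynomial σ k ⧸ Q)}
    (hdeg : ∀ j : ℤ, G.deg j = Submodule.map (Ideal.Quotient.mkₐ k Q).toLinearMap
      (if 0 ≤ j then homogeneousSubmodule σ k j.toNat else ⊥))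
    {J : Ideal (MvPolynomial σ k ⧸ Q)} {P : (σ →₀ ℕ) → Prop}
    (hJ : ∀ p, Ideal.Quotient.mk Q p ∈ J ↔ ∀ x ∈ p.support, P x) :
    {j : ℤ | ∃ y ∈ G.deg j, y ∉ J} = {e | ∃ x : σ →₀ ℕ, e = (x.degree : ℤ) ∧ ¬ P x} := by
  ext j
  constructor
  · rintro ⟨y, hy, hyJ⟩
    rw [hdeg] at hy
    split_ifs at hy with hj
    · obtain ⟨p, hp, rfl⟩ := hy
      obtain ⟨x, hx, hPx⟩ := not_forall₂.1 ((hJ p).not.1 hyJ)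
      refine ⟨x, ?_, hPx⟩
      rw [Finsupp.degree_apply, ← (hp : p.IsHomogeneous j.toNat).degree_eq_sum_deg_support hx]
      omega
    · rw [Submodule.map_bot, Submodule.mem_bot] at hy
      exact absurd (hy ▸ zero_mem J) hyJ
  · rintro ⟨x, rfl, hPx⟩
    refine ⟨Ideal.Quotient.mk Q (monomial x 1), ?_, fun hx => hPx ?_⟩
    · rw [hdeg, if_pos (Nat.cast_nonneg _), Int.toNat_natCast]
      exact ⟨monomial x 1, isHomogeneous_monomial _ rfl, rfl⟩
    · exact (hJ _).1 hx x (by classical simp [support_monomial])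

theorem single_zero_add_single_one_le_iff (u v : ℕ) (x : Fin 2 →₀ ℕ) :
    Finsupp.single 0 u + Finsupp.single 1 v ≤ x ↔ u ≤ x 0 ∧ v ≤ x 1 := by
  simp [Finsupp.le_def, Fin.forall_fin_two]

theorem mk_mem_map_span_X_pow_pow_iff {c : ℕ → ℕ} {d m : ℕ}
    {Q : Ideal (MvPolynomial (Fin 2) k)}
    (hQ : Q = Ideal.span {q | ∃ i : ℕ, i ≤ m ∧ q = X 0 ^ c i * X 1 ^ (d * i)})
    (n : ℕ) (p : MvPolynomial (Fin 2) k) :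
    Ideal.Quotient.mk Q p ∈ Ideal.map (Ideal.Quotient.mk Q) (Ideal.span {X 1 ^ d}) ^ n ↔
      ∀ x ∈ p.support, d * n ≤ x 1 ∨ ∃ i ≤ m, c i ≤ x 0 ∧ d * i ≤ x 1 := by
  set E : Set (Fin 2 →₀ ℕ) := insert (Finsupp.single 1 (d * n))
    ((fun i => Finsupp.single 0 (c i) + Finsupp.single 1 (d * i)) '' Set.Iic m)
  have hspan :
      Ideal.span {X 1 ^ (d * n)} ⊔ Q = Ideal.span ((fun s => monomial s (1 : k)) '' E) := by
    rw [Set.image_insert_eq, Ideal.span_insert, Set.image_image, hQ, X_pow_eq_monomial]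
    congr
    ext q
    simp [X_pow_eq_monomial, monomial_mul, eq_comm]
  rw [← Ideal.map_pow, Ideal.span_singleton_pow, ← pow_mul, Ideal.mem_quotient_iff_mem_sup, hspan,
    mem_ideal_span_monomial_image]
  refine forall₂_congr fun x _ => ?_
  simp only [E, Set.exists_mem_insert, Set.exists_mem_image, Set.mem_Iic, Finsupp.single_le_iff,
    single_zero_add_single_one_le_iff]

theorem isGreatest_reg_map_span_X_pow_pow {c : ℕ → ℕ} (hpos : ∀ i, 1 ≤ c i) (hc : Antitone c)
    {d : ℕ} (hd : 1 ≤ d) {m : ℕ} (hcm : ∀ i, m ≤ i → c i = c m)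
    {Q : Ideal (MvPolynomial (Fin 2) k)}
    (hQ : Q = Ideal.span {q | ∃ i : ℕ, i ≤ m ∧ q = X 0 ^ c i * X 1 ^ (d * i)})
    {G : StdGraded k (MvPolynomial (Fin 2) k ⧸ Q)}
    (hdeg : ∀ j : ℤ, G.deg j = Submodule.map (Ideal.Quotient.mkₐ k Q).toLinearMap
      (if 0 ≤ j then homogeneousSubmodule (Fin 2) k j.toNat else ⊥))
    {n : ℕ} (hn : 1 ≤ n) :
    IsGreatest {e | ∃ i : ℕ, i < n ∧ e = cornerDegree c d i}
      (reg G ⊤ (Ideal.map (Ideal.Quotient.mk Q) (Ideal.span {X 1 ^ d}) ^ n)) := by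
  have hdegs := setOf_deg_notMem_eq hdeg
    (J := Ideal.map (Ideal.Quotient.mk Q) (Ideal.span {X 1 ^ d}) ^ n)
    (P := fun x => d * n ≤ x 1 ∨ c (x 1 / d) ≤ x 0) fun p => by
      simp_rw [mk_mem_map_span_X_pow_pow_iff hQ, exists_le_and_mul_le_iff hc hd hcm]
  simp only [not_or, not_le] at hdegs
  obtain ⟨i, hi, hmax⟩ := Set.exists_max_image (Set.Iio n) (cornerDegree c d) (Set.finite_Iio n)
    ⟨0, hn⟩
  have hN : IsGreatest {e | ∃ i : ℕ, i < n ∧ e = cornerDegree c d i} (cornerDegree c d i) :=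
    ⟨⟨i, hi, rfl⟩, by rintro e ⟨j, hj, rfl⟩; exact hmax j hj⟩
  rwa [reg_top_eq_of_isGreatest (hdegs ▸ (isGreatest_staircase_iff hpos hd n _).2 hN)]

set_option synthInstance.maxHeartbeats 1000000 in
set_option maxHeartbeats 1000000 in
open MvPolynomial in
theorem stmt11_general (c : ℕ → ℕ) (hpos : ∀ n, 1 ≤ c n) (hdec : ∀ n, c (n + 1) ≤ c n)
    (d : ℕ) (hd : 1 ≤ d) (m : ℕ)
    (hm : ∀ n, m < n → c n = c m)
    (Q : Ideal (MvPolynomial (Fin 2) k))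
    (hQ : Q = Ideal.span {q | ∃ i : ℕ, i ≤ m ∧ q = X 0 ^ c i * X 1 ^ (d * i)})
    (I : Ideal (MvPolynomial (Fin 2) k ⧸ Q))
    (hI : I = Ideal.map (Ideal.Quotient.mk Q) (Ideal.span {X 1 ^ d}))
    (G : StdGraded k (MvPolynomial (Fin 2) k ⧸ Q))
    (hdeg : ∀ j : ℤ, G.deg j = Submodule.map (Ideal.Quotient.mkₐ k Q).toLinearMap
      (if 0 ≤ j then homogeneousSubmodule (Fin 2) k j.toNat else ⊥)) :
    (∀ n : ℕ, 1 ≤ n → n ≤ m →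
      reg G ⊤ (I ^ n) =
        sSup {e : ℤ | ∃ i : ℕ, i < n ∧ e = (d : ℤ) * (i + 1) + c i - 2}) ∧
    (∀ n : ℕ, m < n →
      reg G ⊤ (I ^ n) =
        sSup {e : ℤ | e = (d : ℤ) * n + c m - 2 ∨
          ∃ i : ℕ, i < m ∧ e = (d : ℤ) * (i + 1) + c i - 2}) ∧
    ((∀ i : ℕ, i < m → (c i : ℤ) - c (i + 1) ≤ d) →
      ∀ n : ℕ, 1 ≤ n → reg G ⊤ (I ^ n) = (d : ℤ) * n + c (n - 1) - 2) := by
  have hcm : ∀ i, m ≤ i → c i = c m := fun i hi => hi.eq_or_lt.elim (fun h => h ▸ rfl) (hm i)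
  have hreg : ∀ n, 1 ≤ n →
      IsGreatest {e | ∃ i : ℕ, i < n ∧ e = cornerDegree c d i} (reg G ⊤ (I ^ n)) := fun n hn =>
    hI ▸ isGreatest_reg_map_span_X_pow_pow hpos (antitone_nat_of_succ_le hdec) hd hcm hQ hdeg hn
  refine ⟨fun n hn _ => (hreg n hn).csSup_eq.symm, fun n hmn => ?_, fun hstep n hn => ?_⟩
  · exact ((isGreatest_cornerDegree_iff_of_lt hcm hmn _).1 (hreg n (by omega))).csSup_eq.symm
  · rw [(hreg n hn).unique
      (isGreatest_cornerDegree_of_monotone (monotone_cornerDegree hcm hstep) hn),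
      cornerDegree, Nat.cast_pred hn, sub_add_cancel]

set_option synthInstance.maxHeartbeats 1000000 in
set_option maxHeartbeats 1000000 in
open MvPolynomial in
/-- For a weakly decreasing sequence of positive integers `c` stabilizing exactly at
index `m`, with `S = k[x,y]`, `Q = (x^{c_0}, x^{c_1}y^d, …, x^{c_m}y^{dm})`, `R = S/Q`
and `I = (y^d, Q)/Q`:
`reg R/Iⁿ = max {d(i+1) + c_i - 2 : i = 0, …, n-1}` if `1 ≤ n ≤ m`, and
`reg R/Iⁿ = max {d·n + c_m - 2, d(i+1) + c_i - 2 : i = 0, …, m-1}` if `n > m`.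
In particular, if `c_i - c_{i+1} ≤ d` for all `i < m`, then
`reg R/Iⁿ = d·n + c_{n-1} - 2` for all `n ≥ 1`. -/
theorem stmt11 (c : ℕ → ℕ) (hpos : ∀ n, 1 ≤ c n) (hdec : ∀ n, c (n + 1) ≤ c n)
    (d : ℕ) (hd : 1 ≤ d) (m : ℕ)
    (hm : ∀ n, m < n → c n = c m)
    (hmin : ∀ m' : ℕ, (∀ n, m' < n → c n = c m') → m ≤ m')
    (Q : Ideal (MvPolynomial (Fin 2) k))
    (hQ : Q = Ideal.span {q | ∃ i : ℕ, i ≤ m ∧ q = X 0 ^ c i * X 1 ^ (d * i)})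
    (I : Ideal (MvPolynomial (Fin 2) k ⧸ Q))
    (hI : I = Ideal.map (Ideal.Quotient.mk Q) (Ideal.span {X 1 ^ d}))
    (G : StdGraded k (MvPolynomial (Fin 2) k ⧸ Q))
    (hdeg : ∀ j : ℤ, G.deg j = Submodule.map (Ideal.Quotient.mkₐ k Q).toLinearMap
      (if 0 ≤ j then homogeneousSubmodule (Fin 2) k j.toNat else ⊥)) :
    (∀ n : ℕ, 1 ≤ n → n ≤ m →
      reg G ⊤ (I ^ n) =
        sSup {e : ℤ | ∃ i : ℕ, i < n ∧ e = (d : ℤ) * (i + 1) + c i - 2}) ∧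
    (∀ n : ℕ, m < n →
      reg G ⊤ (I ^ n) =
        sSup {e : ℤ | e = (d : ℤ) * n + c m - 2 ∨
          ∃ i : ℕ, i < m ∧ e = (d : ℤ) * (i + 1) + c i - 2}) ∧
    ((∀ i : ℕ, i < m → (c i : ℤ) - c (i + 1) ≤ d) →
      ∀ n : ℕ, 1 ≤ n → reg G ⊤ (I ^ n) = (d : ℤ) * n + c (n - 1) - 2) :=
  stmt11_general c hpos hdec d hd m hm Q hQ I hI G hdeg
end
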